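/- Let Q ∈ ℝ^{k×k} be symmetric positive definite, J ∈ ℝ^{k×k} skew-symmetric, R ∈ ℝ^{k×k} symmetric positive semidefinite, B ∈ ℝ^{k×m₀}; set A = (J − R)Q and C = BᵀQ. Let E, F ∈ ℝ^{n×(n−1)}, L_e = EᵀF, H ∈ ℝ^{p×n}, and suppose every complex eigenvalue of 𝒜 := I_{n−1} ⊗ A − L_e ⊗ BC has strictly negative real part. Let Q̄_f be the symmetric matrix solving the Lyapunov equation 𝒜ᵀ Q̄_f + Q̄_f 𝒜 + (HF ⊗ C)ᵀ(HF ⊗ C) = 0 (the edge observability Gramian). If Π^o ∈ ℝ^{(n−1)×(n−1)} is diagonal positive semidefinite and satisfies L_eᵀΠ^o + Π^o L_e − FᵀHᵀH F ⪰ 0, then Π^o ⊗ Q − Q̄_f is positive semidefinite, i.e., Q̄_f ⪯ Π^o ⊗ Q. -/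

import Mathlib

/-!
With `D := Π^o ⊗ Q - Q̄_f`, the port-Hamiltonian identity `AᵀQ + QA = -2 QRQ` and `QB = Cᵀ` give
`-(𝒜ᵀD + D𝒜) = Π^o ⊗ 2QRQ + (L_eᵀΠ^o + Π^oL_e - FᵀHᵀHF) ⊗ CᵀC`, a sum of Kronecker products of
positive semidefinite matrices. Since `𝒜` is Hurwitz, `exp (t𝒜) → 0`, so for every `x` the
function `t ↦ xᵀ exp (t𝒜ᵀ) D exp (t𝒜) x` is nonincreasing with limit `0`, whence `xᵀDx ≥ 0`.
The decay of `exp (t𝒜)` is read off the generalized eigenvectors of `𝒜` over `ℂ`: on such a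
vector for the eigenvalue `μ`, `exp (t𝒜)` acts as `exp (tμ)` times a polynomial in `t`.
-/

open Matrix Filter NormedSpace Topology Kronecker
open scoped Nat

attribute [local instance] Matrix.linftyOpNormedRing Matrix.linftyOpNormedAlgebra

lemma Complex.tendsto_exp_mul_mul_pow_atTop_nhds_zero {μ : ℂ} (hμ : μ.re < 0) (j : ℕ) :
    Tendsto (fun t : ℝ => Complex.exp (t * μ) * (t : ℂ) ^ j) atTop (𝓝 0) := by
  rw [tendsto_zero_iff_norm_tendsto_zero]
  refine (tendsto_rpow_mul_exp_neg_mul_atTop_nhds_zero j (-μ.re) (neg_pos.2 hμ)).congr' ?_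
  filter_upwards [eventually_ge_atTop 0] with t ht
  simp [Complex.norm_exp, abs_of_nonneg ht, mul_comm]

namespace Matrix

variable {ι : Type*} [Fintype ι] [DecidableEq ι]

lemma exp_mulVec_eq_sum_of_pow_mulVec_eq_zero {𝕂 : Type*} [RCLike 𝕂] {N : Matrix ι ι 𝕂}
    {v : ι → 𝕂} {m : ℕ} (hv : N ^ m *ᵥ v = 0) :
    exp N *ᵥ v = ∑ j ∈ Finset.range m, (j ! : 𝕂)⁻¹ • (N ^ j *ᵥ v) := by
  have hseries := (exp_series_hasSum_exp' (𝕂 := 𝕂) N).map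
    (AddMonoidHom.mk' (· *ᵥ v) fun X Y => add_mulVec X Y v)
    (continuous_id.matrix_mulVec continuous_const)
  simp only [Function.comp_def, AddMonoidHom.mk'_apply, smul_mulVec] at hseries
  refine hseries.unique (hasSum_sum_of_ne_finset_zero fun j hj => ?_)
  have hmj : m ≤ j := by simpa using hj
  simp [← pow_sub_mul_pow N hmj, ← mulVec_mulVec, hv]

lemma tendsto_exp_smul_mulVec_of_pow_mulVec_eq_zero {M : Matrix ι ι ℂ} {μ : ℂ} (hμ : μ.re < 0)
    {v : ι → ℂ} {m : ℕ} (hv : (M - μ • 1) ^ m *ᵥ v = 0) :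
    Tendsto (fun t : ℝ => exp ((t : ℂ) • M) *ᵥ v) atTop (𝓝 0) := by
  set N := M - μ • 1
  have hexp (t : ℝ) : exp ((t : ℂ) • M) *ᵥ v = ∑ j ∈ Finset.range m,
      (Complex.exp (t * μ) * (t : ℂ) ^ j) • ((j ! : ℂ)⁻¹ • (N ^ j *ᵥ v)) := by
    have hsplit : (t : ℂ) • M = (t * μ) • 1 + (t : ℂ) • N := by
      simp [N, smul_sub, smul_smul]
    have htN : ((t : ℂ) • N) ^ m *ᵥ v = 0 := by rw [smul_pow, smul_mulVec, hv, smul_zero]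
    rw [hsplit, Matrix.exp_add_of_commute _ _ ((Commute.one_left _).smul_left _),
      smul_one_eq_diagonal, exp_diagonal, Pi.exp_def, ← smul_one_eq_diagonal, smul_one_mul,
      smul_mulVec, exp_mulVec_eq_sum_of_pow_mulVec_eq_zero htN, Finset.smul_sum]
    refine Finset.sum_congr rfl fun j _ => ?_
    rw [smul_pow, smul_mulVec, smul_smul, smul_smul, smul_smul, Complex.exp_eq_exp_ℂ]
    ring_nf
  simp_rw [hexp]
  simpa using tendsto_finsetSum (Finset.range m) fun j _ =>
    (Complex.tendsto_exp_mul_mul_pow_atTop_nhds_zero hμ j).smul_const ((j ! : ℂ)⁻¹ • (N ^ j *ᵥ v))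

def IsHurwitz (M : Matrix ι ι ℂ) : Prop := ∀ μ : ℂ, M.charpoly.IsRoot μ → μ.re < 0

lemma IsHurwitz.tendsto_exp_smul_mulVec {M : Matrix ι ι ℂ} (hM : M.IsHurwitz) (v : ι → ℂ) :
    Tendsto (fun t : ℝ => exp ((t : ℂ) • M) *ᵥ v) atTop (𝓝 0) := by
  set f : Module.End ℂ (ι → ℂ) := toLinAlgEquiv' M
  have hv : v ∈ ⨆ μ, Module.End.maxGenEigenspace f μ := by
    rw [Module.End.iSup_maxGenEigenspace_eq_top]; trivial
  induction hv using Submodule.iSup_induction' with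
  | mem μ w hw =>
    obtain ⟨k, hk⟩ := (Module.End.mem_maxGenEigenspace _ _ _).1 hw
    have hmat : (M - μ • 1) ^ k *ᵥ w = 0 := by
      rwa [← map_one toLinAlgEquiv', ← map_smul, ← map_sub, ← map_pow] at hk
    rcases eq_or_ne w 0 with rfl | hw0
    · simp
    refine tendsto_exp_smul_mulVec_of_pow_mulVec_eq_zero (hM μ ?_) hmat
    have hμ : f.HasEigenvalue μ := Module.End.hasEigenvalue_of_hasGenEigenvalue (k := k)
      ((Submodule.ne_bot_iff _).2 ⟨w, Module.End.mem_genEigenspace_nat.2 hk, hw0⟩)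
    rw [← charpoly_toLin']
    exact (Module.End.hasEigenvalue_iff_isRoot_charpoly f μ).1 hμ
  | zero => simp
  | add x y _ _ hx hy => simpa [mulVec_add] using hx.add hy

lemma IsHurwitz.tendsto_exp_smul {M : Matrix ι ι ℂ} (hM : M.IsHurwitz) :
    Tendsto (fun t : ℝ => exp ((t : ℂ) • M)) atTop (𝓝 0) := by
  refine tendsto_pi_nhds.2 fun i => tendsto_pi_nhds.2 fun j => ?_
  simpa [mulVec_single_one] using tendsto_pi_nhds.1 (hM.tendsto_exp_smul_mulVec (Pi.single j 1)) i

lemma map_ofReal_exp (A : Matrix ι ι ℝ) :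
    (exp A).map Complex.ofReal = exp (A.map Complex.ofReal) :=
  map_exp Complex.ofRealHom.mapMatrix (continuous_id.matrix_map Complex.continuous_ofReal) A

lemma tendsto_exp_smul_of_isHurwitz_map {A : Matrix ι ι ℝ}
    (hA : (A.map Complex.ofReal).IsHurwitz) :
    Tendsto (fun t : ℝ => exp (t • A)) atTop (𝓝 0) := by
  have h := ((continuous_id.matrix_map Complex.continuous_re).tendsto 0).comp hA.tendsto_exp_smul
  refine (h.congr fun t => ?_).trans (by simp)
  have : (t : ℂ) • A.map Complex.ofReal = (t • A).map Complex.ofReal := by ext; simp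
  rw [Function.comp_apply, id, this, ← map_ofReal_exp, map_map]
  exact map_id' _

lemma PosSemidef.of_neg_lyapunov {A D : Matrix ι ι ℝ}
    (hA : (A.map Complex.ofReal).IsHurwitz) (hD : D.IsHermitian)
    (hW : (-(Aᵀ * D + D * A)).PosSemidef) : D.PosSemidef := by
  refine .of_dotProduct_mulVec_nonneg hD fun x => ?_
  rw [star_trivial]
  let q : Matrix ι ι ℝ →L[ℝ] ℝ := LinearMap.toContinuousLinearMap
    (LinearMap.applyₗ x ∘ₗ LinearMap.applyₗ x ∘ₗ (toLinearMap₂' ℝ).toLinearMap)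
  have hq (M : Matrix ι ι ℝ) : q M = x ⬝ᵥ (M *ᵥ x) := toLinearMap₂'_apply' M x x
  set V : ℝ → ℝ := fun t => q (exp (t • Aᵀ) * D * exp (t • A))
  have hV (t : ℝ) : HasDerivAt V (q (exp (t • Aᵀ) * (Aᵀ * D + D * A) * exp (t • A))) t := by
    have hΦ := ((hasDerivAt_exp_smul_const Aᵀ t).mul_const D).mul (hasDerivAt_exp_smul_const' A t)
    refine (q.hasFDerivAt.comp_hasDerivAt t hΦ).congr_deriv (congrArg q ?_)
    noncomm_ring
  have hV_nonpos (t : ℝ) : q (exp (t • Aᵀ) * (Aᵀ * D + D * A) * exp (t • A)) ≤ 0 := by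
    have := hW.dotProduct_mulVec_nonneg (exp (t • A) *ᵥ x)
    rw [star_trivial, neg_mulVec, dotProduct_neg, neg_nonneg] at this
    rwa [hq, ← transpose_smul, exp_transpose, ← mulVec_mulVec, ← mulVec_mulVec, dotProduct_mulVec,
      vecMul_transpose]
  have hV_lim : Tendsto V atTop (𝓝 0) := by
    have hE := tendsto_exp_smul_of_isHurwitz_map hA
    have hEt : Tendsto (fun t : ℝ => exp (t • Aᵀ)) atTop (𝓝 0) := by
      simpa [← transpose_smul, exp_transpose, Function.comp_def] using
        (continuous_id.matrix_transpose.tendsto 0).comp hE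
    have hΦ := (hEt.mul_const D).mul hE
    rw [zero_mul, zero_mul] at hΦ
    exact map_zero q ▸ (q.continuous.tendsto 0).comp hΦ
  have := (antitone_of_hasDerivAt_nonpos hV hV_nonpos).le_of_tendsto hV_lim 0
  simpa [V, hq] using this

variable {l m n p α : Type*}

lemma kronecker_neg [Ring α] (A : Matrix l m α) (B : Matrix n p α) : A ⊗ₖ (-B) = -(A ⊗ₖ B) := by
  ext; simp

lemma sub_kronecker [Ring α] (A₁ A₂ : Matrix l m α) (B : Matrix n p α) :
    (A₁ - A₂) ⊗ₖ B = A₁ ⊗ₖ B - A₂ ⊗ₖ B := by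
  ext; simp [sub_mul]

lemma transpose_kronecker_mul_kronecker [Fintype l] [Fintype n] [CommRing α]
    (A : Matrix l m α) (B : Matrix n p α) : (A ⊗ₖ B)ᵀ * (A ⊗ₖ B) = (Aᵀ * A) ⊗ₖ (Bᵀ * B) := by
  rw [← kroneckerMap_transpose, ← mul_kronecker_mul]

end Matrix

section PortHamiltonian

variable {κ ν μ : Type*} [Fintype κ] [Fintype ν] [DecidableEq ν] [Fintype μ]

lemma portHamiltonian_lyapunov {Q J R : Matrix κ κ ℝ} (hQ : Qᵀ = Q) (hJ : Jᵀ = -J)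
    (hR : Rᵀ = R) : ((J - R) * Q)ᵀ * Q + Q * ((J - R) * Q) = -(2 • (Q * R * Q)) := by
  rw [transpose_mul, transpose_sub, hJ, hR, hQ]
  noncomm_ring

lemma networked_lyapunov {Q A : Matrix κ κ ℝ} {B : Matrix κ μ ℝ} {C : Matrix μ κ ℝ}
    {L P : Matrix ν ν ℝ} (hQ : Qᵀ = Q) (hC : C = Bᵀ * Q) :
    (1 ⊗ₖ A - L ⊗ₖ (B * C))ᵀ * (P ⊗ₖ Q) + (P ⊗ₖ Q) * (1 ⊗ₖ A - L ⊗ₖ (B * C)) =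
      P ⊗ₖ (Aᵀ * Q + Q * A) - (Lᵀ * P + P * L) ⊗ₖ (Cᵀ * C) := by
  have hBC : (B * C)ᵀ * Q = Cᵀ * C := by rw [transpose_mul, Matrix.mul_assoc, ← hC]
  have hQB : Q * (B * C) = Cᵀ * C := by
    rw [hC, transpose_mul, hQ, transpose_transpose, Matrix.mul_assoc]
  rw [transpose_sub, ← kroneckerMap_transpose, ← kroneckerMap_transpose, transpose_one,
    Matrix.sub_mul, Matrix.mul_sub, ← mul_kronecker_mul, ← mul_kronecker_mul,
    ← mul_kronecker_mul, ← mul_kronecker_mul, Matrix.one_mul, Matrix.mul_one, hBC, hQB,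
    kronecker_add, add_kronecker]
  abel

end PortHamiltonian

theorem generalized_edge_observability_gramian_bound_general
    (n k m₀ p : ℕ)
    (Q J R : Matrix (Fin k) (Fin k) ℝ) (B : Matrix (Fin k) (Fin m₀) ℝ)
    (hQ : Q.PosDef) (hJ : Jᵀ = -J) (hR : R.PosSemidef)
    (A : Matrix (Fin k) (Fin k) ℝ) (hA : A = (J - R) * Q)
    (C : Matrix (Fin m₀) (Fin k) ℝ) (hC : C = Bᵀ * Q)
    (F : Matrix (Fin n) (Fin (n-1)) ℝ)
    (Le : Matrix (Fin (n-1)) (Fin (n-1)) ℝ)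
    (H : Matrix (Fin p) (Fin n) ℝ)
    (𝒜 : Matrix (Fin (n-1) × Fin k) (Fin (n-1) × Fin k) ℝ)
    (h𝒜 : 𝒜 = (1 : Matrix (Fin (n-1)) (Fin (n-1)) ℝ) ⊗ₖ A - Le ⊗ₖ (B * C))
    -- 𝒜 is Hurwitz
    (hHurwitz : ∀ μ : ℂ, ((𝒜.map (Complex.ofReal)).charpoly).IsRoot μ → μ.re < 0)
    -- the edge observability Gramian
    (Qf : Matrix (Fin (n-1) × Fin k) (Fin (n-1) × Fin k) ℝ)
    (hQfsymm : Qfᵀ = Qf)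
    (hQf : 𝒜ᵀ * Qf + Qf * 𝒜 + ((H * F) ⊗ₖ C)ᵀ * ((H * F) ⊗ₖ C) = 0)
    -- the generalized edge observability Gramian certificate
    (Po : Matrix (Fin (n-1)) (Fin (n-1)) ℝ)
    (hPopsd : Po.PosSemidef)
    (hPoineq : (Leᵀ * Po + Po * Le - Fᵀ * Hᵀ * H * F).PosSemidef) :
    (Po ⊗ₖ Q - Qf).PosSemidef := by
  have hQs : Qᵀ = Q := isHermitian_iff_isSymm.1 hQ.isHermitian
  have hRs : Rᵀ = R := isHermitian_iff_isSymm.1 hR.isHermitian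
  have hPos : Poᵀ = Po := isHermitian_iff_isSymm.1 hPopsd.isHermitian
  have hgram : 𝒜ᵀ * Qf + Qf * 𝒜 = -((Fᵀ * Hᵀ * H * F) ⊗ₖ (Cᵀ * C)) := by
    rw [eq_neg_of_add_eq_zero_left hQf, transpose_kronecker_mul_kronecker, transpose_mul,
      ← Matrix.mul_assoc]
  have hcert : 𝒜ᵀ * (Po ⊗ₖ Q) + (Po ⊗ₖ Q) * 𝒜 =
      -(Po ⊗ₖ (2 • (Q * R * Q))) - (Leᵀ * Po + Po * Le) ⊗ₖ (Cᵀ * C) := by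
    rw [h𝒜, networked_lyapunov hQs hC, hA, portHamiltonian_lyapunov hQs hJ hRs, kronecker_neg]
  have hlyap : -(𝒜ᵀ * (Po ⊗ₖ Q - Qf) + (Po ⊗ₖ Q - Qf) * 𝒜) =
      Po ⊗ₖ (2 • (Q * R * Q)) + (Leᵀ * Po + Po * Le - Fᵀ * Hᵀ * H * F) ⊗ₖ (Cᵀ * C) := by
    calc _ = -(𝒜ᵀ * (Po ⊗ₖ Q) + (Po ⊗ₖ Q) * 𝒜) + (𝒜ᵀ * Qf + Qf * 𝒜) := by noncomm_ring
      _ = _ := by rw [hcert, hgram, sub_kronecker]; abel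
  refine .of_neg_lyapunov hHurwitz ?_ (hlyap ▸ ?_)
  · rw [isHermitian_iff_isSymm, IsSymm, transpose_sub, ← kroneckerMap_transpose, hPos, hQs,
      hQfsymm]
  · refine (hPopsd.kronecker (.smul ?_ zero_le_two)).add
      (hPoineq.kronecker (posSemidef_conjTranspose_mul_self C))
    simpa [hQs] using hR.conjTranspose_mul_mul_same Q

/-- the generalized edge observability Gramian `Π^o ⊗ Q` bounds the
edge observability Gramian `Q̄_f` from above: `Q̄_f ⪯ Π^o ⊗ Q`. -/
theorem generalized_edge_observability_gramian_bound
    (n k m₀ p : ℕ) (hn : 2 ≤ n)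
    (Q J R : Matrix (Fin k) (Fin k) ℝ) (B : Matrix (Fin k) (Fin m₀) ℝ)
    (hQ : Q.PosDef) (hJ : Jᵀ = -J) (hR : R.PosSemidef)
    (A : Matrix (Fin k) (Fin k) ℝ) (hA : A = (J - R) * Q)
    (C : Matrix (Fin m₀) (Fin k) ℝ) (hC : C = Bᵀ * Q)
    (E F : Matrix (Fin n) (Fin (n-1)) ℝ)
    (Le : Matrix (Fin (n-1)) (Fin (n-1)) ℝ) (hLe : Le = Eᵀ * F)
    (H : Matrix (Fin p) (Fin n) ℝ)
    (𝒜 : Matrix (Fin (n-1) × Fin k) (Fin (n-1) × Fin k) ℝ)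
    (h𝒜 : 𝒜 = (1 : Matrix (Fin (n-1)) (Fin (n-1)) ℝ) ⊗ₖ A - Le ⊗ₖ (B * C))
    -- 𝒜 is Hurwitz
    (hHurwitz : ∀ μ : ℂ, ((𝒜.map (Complex.ofReal)).charpoly).IsRoot μ → μ.re < 0)
    -- the edge observability Gramian
    (Qf : Matrix (Fin (n-1) × Fin k) (Fin (n-1) × Fin k) ℝ)
    (hQfsymm : Qfᵀ = Qf)
    (hQf : 𝒜ᵀ * Qf + Qf * 𝒜 + ((H * F) ⊗ₖ C)ᵀ * ((H * F) ⊗ₖ C) = 0)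
    -- the generalized edge observability Gramian certificate
    (Po : Matrix (Fin (n-1)) (Fin (n-1)) ℝ)
    (hPodiag : Po.IsDiag) (hPopsd : Po.PosSemidef)
    (hPoineq : (Leᵀ * Po + Po * Le - Fᵀ * Hᵀ * H * F).PosSemidef) :
    (Po ⊗ₖ Q - Qf).PosSemidef :=
  generalized_edge_observability_gramian_bound_general n k m₀ p Q J R B hQ hJ hR A hA C hC F Le H 𝒜
    h𝒜 hHurwitz Qf hQfsymm hQf Po hPopsd hPoineq
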